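/- For real numbers $a,b$, any $r \ge 2$ and any $k > 0$, with $|t|_k := \max\{|t|, k\}$, the inequality $(a-b)\big(a|a|_k^{r-2} - b|b|_k^{r-2}\big) \ge \frac{4(r-1)}{r^2}\big(a|a|_k^{r/2-1} - b|b|_k^{r/2-1}\big)^2$ holds. -/

import Mathlib

open Set MeasureTheory intervalIntegral Filter

namespace TruncIneq

/-- the function `t ↦ t * (max |t| k)^p` -/
noncomputable def g (k p t : ℝ) : ℝ := t * (max |t| k) ^ p

/-- a.e./right derivative of `g k p` -/
noncomputable def d (k p t : ℝ) : ℝ :=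
  if -k ≤ t ∧ t < k then k ^ p else (p + 1) * |t| ^ p

lemma g_cont (hp : 0 ≤ p) : Continuous (g k p) :=
  continuous_id.mul ((continuous_abs.max continuous_const).rpow_const fun _ => Or.inr hp)

lemma d_nonneg (hk : 0 < k) (hp : 0 ≤ p) (t : ℝ) : 0 ≤ d k p t := by
  unfold d
  split_ifs with h
  · positivity
  · have h1 : 0 ≤ |t| ^ p := Real.rpow_nonneg (abs_nonneg t) p
    nlinarith

lemma g_deriv (hk : 0 < k) (hp : 0 ≤ p) (x : ℝ) :
    HasDerivWithinAt (g k p) (d k p x) (Ioi x) x := by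
  unfold d
  split_ifs with h
  · -- inner region: g agrees with `t ↦ t * k ^ p` on `Ioi x ∩ Iio k`
    have hi : HasDerivAt (fun t : ℝ => t * k ^ p) (k ^ p) x := by
      simpa using (hasDerivAt_id x).mul_const (k ^ p)
    apply hi.hasDerivWithinAt.congr_of_eventuallyEq
    · filter_upwards [self_mem_nhdsWithin,
        mem_nhdsWithin_of_mem_nhds (Iio_mem_nhds h.2)] with t ht1 ht2
      have habs : |t| < k := abs_lt.2 ⟨lt_of_le_of_lt h.1 ht1, ht2⟩
      simp [g, max_eq_right habs.le]
    · have habs : |x| ≤ k := abs_le.2 ⟨h.1, h.2.le⟩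
      simp [g, max_eq_right habs]
  · -- outer region
    push_neg at h
    rcases lt_or_ge x (-k) with hx | hx
    · -- x < -k
      have hxneg : x < 0 := by linarith
      have hnx : (0:ℝ) < -x := by linarith
      have ho : HasDerivAt (fun t : ℝ => -((-t) ^ (p + 1))) ((p + 1) * |x| ^ p) x := by
        have h1 := Real.hasDerivAt_rpow_const (x := -x) (p := p + 1) (Or.inl (ne_of_gt hnx))
        have h2 := (h1.comp x (hasDerivAt_neg x)).neg
        have hax : |x| = -x := abs_of_neg hxneg
        refine (h2 : HasDerivAt (fun t : ℝ => -((-t) ^ (p + 1))) _ x).congr_deriv ?_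
        rw [hax]; ring_nf
      apply ho.hasDerivWithinAt.congr_of_eventuallyEq
      · filter_upwards [mem_nhdsWithin_of_mem_nhds (Iio_mem_nhds hx)] with t ht
        have ht' : t < -k := ht
        have htneg : t < 0 := by linarith
        have habs : |t| = -t := abs_of_neg htneg
        have hmax : max |t| k = -t := by
          rw [habs]; exact max_eq_left (by linarith)
        have hne : (-t : ℝ) ≠ 0 := by linarith
        rw [g, hmax, Real.rpow_add_one hne]
        ring
      · have habs : |x| = -x := abs_of_neg hxneg
        have hmax : max |x| k = -x := by
          rw [habs]; exact max_eq_left (by linarith)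
        have hne : (-x : ℝ) ≠ 0 := by linarith
        rw [g, hmax, Real.rpow_add_one hne]
        ring
    ·
      have hkx : k ≤ x := h (by linarith)
      have hxpos : 0 < x := lt_of_lt_of_le hk hkx
      have ho : HasDerivAt (fun t : ℝ => t ^ (p + 1)) ((p + 1) * |x| ^ p) x := by
        have h1 := Real.hasDerivAt_rpow_const (x := x) (p := p + 1) (Or.inl (ne_of_gt hxpos))
        have hax : |x| = x := abs_of_pos hxpos
        convert h1 using 1
        rw [hax]; ring_nf
      apply ho.hasDerivWithinAt.congr_of_eventuallyEq
      · filter_upwards [self_mem_nhdsWithin] with t ht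
        have htpos : 0 < t := lt_of_lt_of_le hxpos (le_of_lt ht)
        have hmax : max |t| k = t := by
          rw [abs_of_pos htpos]; exact max_eq_left (le_trans hkx ht.le)
        rw [g, hmax, Real.rpow_add_one (ne_of_gt htpos)]
        ring
      · have hmax : max |x| k = x := by
          rw [abs_of_pos hxpos]; exact max_eq_left hkx
        rw [g, hmax, Real.rpow_add_one (ne_of_gt hxpos)]
        ring

lemma d_meas (k p : ℝ) (hp : 0 ≤ p) : Measurable (d k p) := by
  unfold d
  apply Measurable.ite
  · exact (measurableSet_le measurable_const measurable_id).inter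
      (measurableSet_lt measurable_id measurable_const)
  · exact measurable_const
  · exact (continuous_const.mul (continuous_abs.rpow_const fun _ => Or.inr hp)).measurable

lemma intInt_of_bdd {f : ℝ → ℝ} (hf : Measurable f) (b a M : ℝ)
    (hM : ∀ t ∈ Set.uIoc b a, |f t| ≤ M) : IntervalIntegrable f volume b a := by
  rw [intervalIntegrable_iff]
  apply Measure.integrableOn_of_bounded (M := M)
  · show volume (Set.uIoc b a) ≠ ⊤
    have : Set.uIoc b a = Ioc (min b a) (max b a) := rfl
    rw [this]
    exact measure_Ioc_lt_top.ne
  · exact hf.aestronglyMeasurable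
  · exact (ae_restrict_iff' measurableSet_uIoc).2 (ae_of_all _ (by simpa [Real.norm_eq_abs] using hM))

lemma abs_le_of_mem_uIoc {b a t : ℝ} (ht : t ∈ Set.uIoc b a) : |t| ≤ |b| + |a| := by
  rw [Set.mem_uIoc] at ht
  have h1 := le_abs_self a; have h2 := le_abs_self b
  have h3 := neg_abs_le a; have h4 := neg_abs_le b
  have h5 := abs_nonneg a; have h6 := abs_nonneg b
  rcases ht with ⟨ht1, ht2⟩ | ⟨ht1, ht2⟩ <;> rw [abs_le] <;> constructor <;> linarith

lemma d_intInt (hk : 0 < k) (hp : 0 ≤ p) (b a : ℝ) :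
    IntervalIntegrable (d k p) volume b a := by
  apply intInt_of_bdd (d_meas k p hp) b a (k ^ p + (p + 1) * (|b| + |a| + k) ^ p)
  intro t ht
  have habs : |t| ≤ |b| + |a| := abs_le_of_mem_uIoc ht
  have hC : (0:ℝ) < |b| + |a| + k := by
    have := abs_nonneg a; have := abs_nonneg b; linarith
  have hC2 : |t| ^ p ≤ (|b| + |a| + k) ^ p :=
    Real.rpow_le_rpow (abs_nonneg t) (by linarith) hp
  have hC3 : (0:ℝ) ≤ (|b| + |a| + k) ^ p := Real.rpow_nonneg hC.le p
  have hk2 : (0:ℝ) ≤ k ^ p := (Real.rpow_pos_of_pos hk p).le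
  rw [abs_of_nonneg (d_nonneg hk hp t)]
  unfold d
  split_ifs with h
  · nlinarith
  · nlinarith

lemma d_sq_intInt (hk : 0 < k) (hp : 0 ≤ p) (b a : ℝ) :
    IntervalIntegrable (fun t => d k p t ^ 2) volume b a := by
  apply intInt_of_bdd ((d_meas k p hp).pow_const 2) b a
    ((k ^ p + (p + 1) * (|b| + |a| + k) ^ p) ^ 2)
  intro t ht
  have habs : |t| ≤ |b| + |a| := abs_le_of_mem_uIoc ht
  have hC : (0:ℝ) < |b| + |a| + k := by
    have := abs_nonneg a; have := abs_nonneg b; linarith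
  have hC2 : |t| ^ p ≤ (|b| + |a| + k) ^ p :=
    Real.rpow_le_rpow (abs_nonneg t) (by linarith) hp
  have hC3 : (0:ℝ) ≤ (|b| + |a| + k) ^ p := Real.rpow_nonneg hC.le p
  have hk2 : (0:ℝ) ≤ k ^ p := (Real.rpow_pos_of_pos hk p).le
  have hd : d k p t ≤ k ^ p + (p + 1) * (|b| + |a| + k) ^ p := by
    unfold d; split_ifs with h
    · nlinarith
    · nlinarith
  have hd0 := d_nonneg hk hp t
  rw [abs_of_nonneg (sq_nonneg _)]
  nlinarith

lemma g_ftc (hk : 0 < k) (hp : 0 ≤ p) {b a : ℝ} (hba : b ≤ a) :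
    ∫ t in b..a, d k p t = g k p a - g k p b :=
  integral_eq_sub_of_hasDeriv_right_of_le hba ((g_cont hp).continuousOn)
    (fun x _ => g_deriv hk hp x) (d_intInt hk hp b a)

/-- ad hoc Cauchy–Schwarz for interval integrals -/
lemma cs {f : ℝ → ℝ} {b a : ℝ} (hba : b ≤ a)
    (h1 : IntervalIntegrable f volume b a)
    (h2 : IntervalIntegrable (fun t => f t ^ 2) volume b a) :
    (∫ t in b..a, f t) ^ 2 ≤ (a - b) * ∫ t in b..a, f t ^ 2 := by
  rcases eq_or_lt_of_le hba with rfl | hlt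
  · simp
  have hL0 : 0 < a - b := by linarith
  set I := ∫ t in b..a, f t with hI
  set J := ∫ t in b..a, f t ^ 2 with hJ
  set c := I / (a - b) with hc
  have key : 0 ≤ ∫ t in b..a, (f t - c) ^ 2 :=
    intervalIntegral.integral_nonneg hba (fun t _ => sq_nonneg _)
  have expand : ∫ t in b..a, (f t - c) ^ 2 = J - 2 * c * I + c ^ 2 * (a - b) := by
    have heq : (fun t => (f t - c) ^ 2) = fun t => f t ^ 2 - 2 * c * f t + c ^ 2 := by
      funext t; ring
    rw [heq, intervalIntegral.integral_add ((h2.sub (h1.const_mul (2 * c))))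
      intervalIntegrable_const,
      intervalIntegral.integral_sub h2 (h1.const_mul (2 * c)),
      intervalIntegral.integral_const_mul, intervalIntegral.integral_const]
    rw [smul_eq_mul]; ring
  rw [expand] at key
  have h3 : c * (a - b) = I := div_mul_cancel₀ _ (ne_of_gt hL0)
  nlinarith [mul_nonneg hL0.le key, sq_nonneg (I - c * (a - b))]

lemma d_sq_le (hr : 2 ≤ r) (hk : 0 < k) (t : ℝ) :
    d k (r / 2 - 1) t ^ 2 ≤ r ^ 2 / (4 * (r - 1)) * d k (r - 2) t := by
  have h4 : (0:ℝ) < 4 * (r - 1) := by linarith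
  have hle : 4 * (r - 1) ≤ r ^ 2 := by nlinarith [sq_nonneg (r - 2)]
  unfold d
  split_ifs with h
  · have hsq : (k ^ (r / 2 - 1)) ^ 2 = k ^ (r - 2) := by
      rw [← Real.rpow_natCast (k ^ (r / 2 - 1)) 2, ← Real.rpow_mul hk.le]
      norm_num; ring_nf
    rw [hsq]
    have h1 : (1:ℝ) ≤ r ^ 2 / (4 * (r - 1)) := (one_le_div h4).2 hle
    have h2 : (0:ℝ) ≤ k ^ (r - 2) := (Real.rpow_pos_of_pos hk _).le
    nlinarith
  · have habs : k ≤ |t| := by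
      rcases not_and_or.1 h with h1 | h2
      · push_neg at h1
        calc k ≤ -t := by linarith
        _ ≤ |t| := by rw [← abs_neg]; exact le_abs_self _
      · push_neg at h2
        exact le_trans h2 (le_abs_self t)
    have htpos : (0:ℝ) < |t| := lt_of_lt_of_le hk habs
    have hsq : (|t| ^ (r / 2 - 1)) ^ 2 = |t| ^ (r - 2) := by
      rw [← Real.rpow_natCast (|t| ^ (r / 2 - 1)) 2, ← Real.rpow_mul htpos.le]
      norm_num; ring_nf
    have hA : (0:ℝ) ≤ |t| ^ (r - 2) := (Real.rpow_pos_of_pos htpos _).le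
    rw [mul_pow, hsq]
    apply le_of_eq
    have hne : r - 1 ≠ 0 := by intro h'; rw [h'] at h4; simp at h4
    field_simp
    ring
  
lemma main (a b r k : ℝ) (hr : 2 ≤ r) (hk : 0 < k) (hba : b ≤ a) :
    4 * (r - 1) / r ^ 2 *
        (a * (max |a| k) ^ (r / 2 - 1) - b * (max |b| k) ^ (r / 2 - 1)) ^ 2 ≤
      (a - b) * (a * (max |a| k) ^ (r - 2) - b * (max |b| k) ^ (r - 2)) := by
  have hp1 : (0:ℝ) ≤ r - 2 := by linarith
  have hp2 : (0:ℝ) ≤ r / 2 - 1 := by linarith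
  have hrpos : (0:ℝ) < r := by linarith
  have h4 : (0:ℝ) < 4 * (r - 1) := by linarith
  have hftc1 : ∫ t in b..a, d k (r - 2) t = g k (r - 2) a - g k (r - 2) b :=
    g_ftc hk hp1 hba
  have hftc2 : ∫ t in b..a, d k (r / 2 - 1) t = g k (r / 2 - 1) a - g k (r / 2 - 1) b :=
    g_ftc hk hp2 hba
  have hcs := cs hba (d_intInt hk hp2 b a) (d_sq_intInt hk hp2 b a)
  have hmono : (∫ t in b..a, d k (r / 2 - 1) t ^ 2)
      ≤ r ^ 2 / (4 * (r - 1)) * (g k (r - 2) a - g k (r - 2) b) := by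
    rw [← hftc1, ← intervalIntegral.integral_const_mul]
    exact integral_mono_on hba (d_sq_intInt hk hp2 b a)
      ((d_intInt hk hp1 b a).const_mul _) (fun t _ => d_sq_le hr hk t)
  rw [hftc2] at hcs
  set X := g k (r / 2 - 1) a - g k (r / 2 - 1) b with hX
  set Y := g k (r - 2) a - g k (r - 2) b with hY
  have hkey : X ^ 2 ≤ (a - b) * (r ^ 2 / (4 * (r - 1)) * Y) :=
    le_trans hcs (mul_le_mul_of_nonneg_left hmono (by linarith))
  have hCpos : (0:ℝ) < 4 * (r - 1) / r ^ 2 := by positivity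
  have hfin : 4 * (r - 1) / r ^ 2 * ((a - b) * (r ^ 2 / (4 * (r - 1)) * Y)) = (a - b) * Y := by
    have hne1 : r - 1 ≠ 0 := (by linarith : (0:ℝ) < r - 1).ne'
    field_simp
  have : 4 * (r - 1) / r ^ 2 * X ^ 2 ≤ (a - b) * Y := by
    calc 4 * (r - 1) / r ^ 2 * X ^ 2
        ≤ 4 * (r - 1) / r ^ 2 * ((a - b) * (r ^ 2 / (4 * (r - 1)) * Y)) :=
          mul_le_mul_of_nonneg_left hkey hCpos.le
      _ = (a - b) * Y := hfin
  simpa [g, hX, hY] using this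

end TruncIneq

/-- the elementary truncation inequality, with `|t|_k = max |t| k`:
`(a-b)(a|a|_k^{r-2} - b|b|_k^{r-2}) ≥ (4(r-1)/r²)(a|a|_k^{r/2-1} - b|b|_k^{r/2-1})²`
for all reals `a, b`, `r ≥ 2`, `k > 0`. -/
theorem truncation_inequality (a b r k : ℝ) (hr : 2 ≤ r) (hk : 0 < k) :
    4 * (r - 1) / r ^ 2 *
        (a * (max |a| k) ^ (r / 2 - 1) - b * (max |b| k) ^ (r / 2 - 1)) ^ 2 ≤
      (a - b) * (a * (max |a| k) ^ (r - 2) - b * (max |b| k) ^ (r - 2)) := by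
  rcases le_total b a with h | h
  · exact TruncIneq.main a b r k hr hk h
  · have h1 := TruncIneq.main b a r k hr hk h
    have e1 : (b * (max |b| k) ^ (r / 2 - 1) - a * (max |a| k) ^ (r / 2 - 1)) ^ 2
        = (a * (max |a| k) ^ (r / 2 - 1) - b * (max |b| k) ^ (r / 2 - 1)) ^ 2 := by ring
    have e2 : (b - a) * (b * (max |b| k) ^ (r - 2) - a * (max |a| k) ^ (r - 2))
        = (a - b) * (a * (max |a| k) ^ (r - 2) - b * (max |b| k) ^ (r - 2)) := by ring
    rw [e1, e2] at h1
    exact h1
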